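/- arXiv:1702.05834 — 3 statements merged into one kernel-verified Lean document; each statement's English description precedes it below -/
import Mathlib

section
/- Let A be a finite-dimensional algebra over an algebraically closed field K, and suppose the map λ ↦ λ' (defined by soc(P^λ) ≅ L^{λ'}) is an involution on the set Λ₀ of labels of projective-injective indecomposables. For λ, μ ∈ Λ₀ and any nonzero f ∈ Hom_A(P^λ, P^μ), there exist g ∈ Hom_A(P^μ, P^{λ'}) and h ∈ Hom_A(P^{μ'}, P^λ) such that g∘f = θ_λ and f∘h = θ_{μ'}, where θ_λ denotes a fixed nonzero homomorphism P^λ → P^{λ'} whose image equals soc(P^{λ'}). -/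
/-- The socle of a module: the largest semisimple submodule. -/
def Socle (A M : Type) [Ring A] [AddCommGroup M] [Module A M] : Submodule A M :=
  ⨆ (p : Submodule A M) (_ : IsSimpleModule A ↥p), p

/-- The radical of a module: the intersection of all maximal submodules. -/
def Rad (A M : Type) [Ring A] [AddCommGroup M] [Module A M] : Submodule A M :=
  sInf {p : Submodule A M | IsCoatom p}

/-!
The map `θ_λ` has simple image, so its kernel is a maximal submodule of `P^λ`; as `P^λ` is a
projective cover of a simple module, that kernel is `rad P^λ`, which contains the kernel of every
nonzero `f`. Hence `θ_λ` factors through the image of `f`, and injectivity of `P^{λ'}` extends the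
factor to `P^μ`. Dually, the image of `θ_{μ'}` is the simple socle of the injective `P^μ`, which
lies in every nonzero submodule, in particular in the image of `f`; projectivity of `P^{μ'}` lifts
`θ_{μ'}` through `f`.
-/

open LinearMap

section SocleRad

variable {A M : Type} [Ring A] [AddCommGroup M] [Module A M]

theorem le_socle_of_isSimpleModule {S : Submodule A M} (hS : IsSimpleModule A S) :
    S ≤ Socle A M :=
  le_iSup₂ (f := fun (p : Submodule A M) (_ : IsSimpleModule A p) => p) S hS

theorem socle_le_of_ne_bot [IsAtomic (Submodule A M)] (hsoc : IsAtom (Socle A M))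
    {N : Submodule A M} (hN : N ≠ ⊥) : Socle A M ≤ N := by
  obtain ⟨S, hS, hSN⟩ := (eq_bot_or_exists_atom_le N).resolve_left hN
  have hS_soc : S ≤ Socle A M := le_socle_of_isSimpleModule (isSimpleModule_iff_isAtom.2 hS)
  rwa [(hsoc.le_iff.1 hS_soc).resolve_left hS.1] at hSN

theorem rad_le_of_isCoatom {N : Submodule A M} (hN : IsCoatom N) : Rad A M ≤ N :=
  sInf_le hN

theorem le_rad_of_ne_top [IsCoatomic (Submodule A M)] (hrad : IsCoatom (Rad A M))
    {N : Submodule A M} (hN : N ≠ ⊤) : N ≤ Rad A M := by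
  obtain ⟨X, hX, hNX⟩ := (eq_top_or_exists_le_coatom N).resolve_left hN
  rwa [(hrad.le_iff.1 (rad_le_of_isCoatom hX)).resolve_left hX.1] at hNX

end SocleRad

universe u

namespace LinearMap

variable {A M : Type*} [Ring A] [AddCommGroup M] [Module A M]

theorem exists_comp_eq_of_ker_le {N Q : Type u} [AddCommGroup N] [Module A N] [AddCommGroup Q]
    [Module A Q] [Module.Injective A Q] (f : M →ₗ[A] N) (θ : M →ₗ[A] Q)
    (hker : ker f ≤ ker θ) : ∃ g : N →ₗ[A] Q, g ∘ₗ f = θ := by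
  let θ' : range f →ₗ[A] Q := (ker f).liftQ θ hker ∘ₗ f.quotKerEquivRange.symm.toLinearMap
  obtain ⟨g, hg⟩ := Module.Injective.out (range f).subtype (Submodule.injective_subtype _) θ'
  refine ⟨g, LinearMap.ext fun x => ?_⟩
  have hx : f.quotKerEquivRange.symm (f.rangeRestrict x) = (ker f).mkQ x :=
    f.quotKerEquivRange_symm_apply_image x _
  simpa [θ', hx] using hg (f.rangeRestrict x)

theorem exists_comp_eq_of_range_le {N Q : Type*} [AddCommGroup N] [Module A N] [AddCommGroup Q]
    [Module A Q] [Module.Projective A Q] (f : M →ₗ[A] N) (θ : Q →ₗ[A] N)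
    (hrange : range θ ≤ range f) : ∃ h : Q →ₗ[A] M, f ∘ₗ h = θ := by
  obtain ⟨h, hh⟩ := Module.projective_lifting_property f.rangeRestrict
    (θ.codRestrict (range f) fun x => hrange ⟨x, rfl⟩) f.surjective_rangeRestrict
  exact ⟨h, LinearMap.ext fun x => congrArg Subtype.val (LinearMap.congr_fun hh x)⟩

end LinearMap

theorem stmt_1_general
    (K A : Type) [Field K] [Ring A] [Algebra K A]
    (Lam : Type) (L P : Lam → Type)
    [∀ l, AddCommGroup (L l)] [∀ l, Module A (L l)]
    [∀ l, AddCommGroup (P l)] [∀ l, Module A (P l)] [∀ l, Module K (P l)]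
    [∀ l, IsScalarTower K A (P l)] [∀ l, FiniteDimensional K (P l)]
    (hsimple : ∀ l, IsSimpleModule A (L l))
    (hproj : ∀ l, Module.Projective A (P l))
    (hcover : ∀ l, ∃ π : P l →ₗ[A] L l, Function.Surjective π ∧ LinearMap.ker π = Rad A (P l))
    -- the map ' on Λ₀, an involution, with soc(P^λ) ≅ L^{λ'}
    (pr : Lam → Lam)
    (hpr : ∀ l, Module.Injective A (P l) → Nonempty (↥(Socle A (P l)) ≃ₗ[A] L (pr l)))
    (hprinj : ∀ l, Module.Injective A (P l) → Module.Injective A (P (pr l)))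
    (hprinv : ∀ l, Module.Injective A (P l) → pr (pr l) = l)
    -- the fixed maps θ_λ with image soc(P^{λ'})
    (θ : ∀ l, P l →ₗ[A] P (pr l))
    (hθ : ∀ l, Module.Injective A (P l) → LinearMap.range (θ l) = Socle A (P (pr l)))
    (l m : Lam) (hl : Module.Injective A (P l)) (hm : Module.Injective A (P m))
    (f : P l →ₗ[A] P m) (hf : f ≠ 0) :
    (∃ g : P m →ₗ[A] P (pr l), g.comp f = θ l) ∧
    (∃ h : P (pr m) →ₗ[A] P l, ∀ x : P (pr m),
      f (h x) = cast (congrArg P (hprinv m hm)) (θ (pr m) x)) := by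
  have hfin : ∀ j, Module.Finite A (P j) := fun j => .of_restrictScalars_finite K A (P j)
  have hatomic : ∀ j, IsAtomic (Submodule A (P j)) := fun j =>
    isAtomic_of_orderBot_wellFounded_lt (isArtinian_of_tower K inferInstance).wf
  have hsimple_socle : ∀ j, Module.Injective A (P j) → IsSimpleModule A (Socle A (P j)) :=
    fun j hj => (hpr j hj).elim fun e => IsSimpleModule.congr e
  constructor
  · obtain ⟨π, hπ, hker⟩ := hcover l
    have hrad : IsCoatom (Rad A (P l)) := hker ▸ isCoatom_ker_of_surjective hπ
    have : IsSimpleModule A (range (θ l)) := (hθ l hl).symm ▸ hsimple_socle _ (hprinj l hl)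
    have hθker : IsCoatom (ker (θ l)) :=
      ker_rangeRestrict (θ l) ▸ isCoatom_ker_of_surjective (θ l).surjective_rangeRestrict
    have : Module.Injective A (P (pr l)) := hprinj l hl
    exact f.exists_comp_eq_of_ker_le (θ l)
      ((le_rad_of_ne_top hrad (ker_eq_top.not.2 hf)).trans (rad_le_of_isCoatom hθker))
  · have hsoc_le : Socle A (P m) ≤ range f :=
      socle_le_of_ne_bot (isSimpleModule_iff_isAtom.1 (hsimple_socle m hm)) (range_eq_bot.not.2 hf)
    -- `cast` blocks rewriting along `pr (pr m) = m`, so generalize that index first.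
    suffices ∀ k (e : k = m) (φ : P (pr m) →ₗ[A] P k), range φ = Socle A (P k) →
        ∃ h : P (pr m) →ₗ[A] P l, ∀ x, f (h x) = cast (congrArg P e) (φ x) from
      this _ (hprinv m hm) _ (hθ (pr m) (hprinj m hm))
    rintro k rfl φ hφ
    obtain ⟨h, hh⟩ := f.exists_comp_eq_of_range_le φ (hφ ▸ hsoc_le)
    exact ⟨h, LinearMap.congr_fun hh⟩

/-- With `λ ↦ λ'` an involution on `Λ₀` and `θ_λ : P^λ → P^{λ'}` the fixed
homomorphism with image `soc(P^{λ'})`, for any nonzero `f ∈ Hom_A(P^λ, P^μ)` with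
`λ, μ ∈ Λ₀` there exist `g ∈ Hom_A(P^μ, P^{λ'})` and `h ∈ Hom_A(P^{μ'}, P^λ)` such that
`g ∘ f = θ_λ` and `f ∘ h = θ_{μ'}` (the latter equality up to the canonical identification
`P^{μ''} = P^μ` given by the involution). -/
theorem stmt_1
    (K A : Type) [Field K] [IsAlgClosed K] [Ring A] [Algebra K A] [FiniteDimensional K A]
    (Lam : Type) (L P : Lam → Type)
    [∀ l, AddCommGroup (L l)] [∀ l, Module A (L l)] [∀ l, Module K (L l)]
    [∀ l, IsScalarTower K A (L l)] [∀ l, FiniteDimensional K (L l)]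
    [∀ l, AddCommGroup (P l)] [∀ l, Module A (P l)] [∀ l, Module K (P l)]
    [∀ l, IsScalarTower K A (P l)] [∀ l, FiniteDimensional K (P l)]
    (hsimple : ∀ l, IsSimpleModule A (L l))
    (hdistinct : ∀ l m, Nonempty (L l ≃ₗ[A] L m) → l = m)
    (hproj : ∀ l, Module.Projective A (P l))
    (hcover : ∀ l, ∃ π : P l →ₗ[A] L l, Function.Surjective π ∧ LinearMap.ker π = Rad A (P l))
    -- the map ' on Λ₀, an involution, with soc(P^λ) ≅ L^{λ'}
    (pr : Lam → Lam)
    (hpr : ∀ l, Module.Injective A (P l) → Nonempty (↥(Socle A (P l)) ≃ₗ[A] L (pr l)))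
    (hprinj : ∀ l, Module.Injective A (P l) → Module.Injective A (P (pr l)))
    (hprinv : ∀ l, Module.Injective A (P l) → pr (pr l) = l)
    -- the fixed maps θ_λ with image soc(P^{λ'})
    (θ : ∀ l, P l →ₗ[A] P (pr l))
    (hθ : ∀ l, Module.Injective A (P l) → LinearMap.range (θ l) = Socle A (P (pr l)))
    (l m : Lam) (hl : Module.Injective A (P l)) (hm : Module.Injective A (P m))
    (f : P l →ₗ[A] P m) (hf : f ≠ 0) :
    (∃ g : P m →ₗ[A] P (pr l), g.comp f = θ l) ∧
    (∃ h : P (pr m) →ₗ[A] P l, ∀ x : P (pr m),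
      f (h x) = cast (congrArg P (hprinv m hm)) (θ (pr m) x)) :=
  stmt_1_general K A Lam L P hsimple hproj hcover pr hpr hprinj hprinv θ hθ l m hl hm f hf
end

section
/- Let A be a finite-dimensional algebra over an algebraically closed field K such that the map λ ↦ λ' is an involution on Λ₀. Then the endomorphism algebra B = End_A(⊕_{λ∈Λ₀} P^λ) of the basic projective-injective module, equipped with the canonical linear form tr attached to any appropriate basis (tr takes value 1 on each θ_λ and 0 on all other basis elements), has non-degenerate associated bilinear form (f,g) ↦ tr(fg). In particular, B is a Frobenius algebra over K. -/
/-- The canonical embedding of `Hom_A(P^λ, P^μ)` into `End_A(⊕ P^λ)`. -/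
noncomputable def emb (A : Type) [Ring A] (ι : Type) [DecidableEq ι]
    (P : ι → Type) [∀ i, AddCommGroup (P i)] [∀ i, Module A (P i)]
    (l m : ι) (f : P l →ₗ[A] P m) : Module.End A (DirectSum ι P) :=
  (DirectSum.lof A ι P m).comp (f.comp (DirectSum.component A ι P l))

/-!
View `B` as block matrices whose `(u, v)` entry lies in `Hom_A(P^u, P^v)`. Every basis vector sits
in a single block and `tr` is nonzero only on the `θ`-blocks, so `tr` kills every block `(u, v)`
with `v ≠ u'`; as `λ ↦ λ'` is injective, `tr (a * z)` for `a` in block `(t, s')` only sees the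
`(s, t)` block of `z`, and symmetrically for `tr (z * a)`.

For `x ≠ 0` choose a nonzero block `h : P^s → P^{u'}` of `x`. The top of `P^s` is simple and
`θ_s` has simple image in the injective module `P^{s'}`, so `θ_s = g ∘ h` for some `g`.
The simple socle `im θ_u` of `P^{u'}` lies in the nonzero submodule `im h` and `P^u` is
projective, so `θ_u = h ∘ g'` for some `g'`. Placing `g` and `g'` in their blocks gives `y`, `y'`
with `tr (y * x) = tr (x * y') = 1`.
-/

section Factorization
variable {R : Type} [Ring R] {M N X : Type} [AddCommGroup M] [Module R M]
  [AddCommGroup N] [Module R N] [AddCommGroup X] [Module R X]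

theorem socle_le_of_ne_bot_s2 [IsArtinian R M] (hsoc : IsSimpleModule R (Socle R M))
    {p : Submodule R M} (hp : p ≠ ⊥) : Socle R M ≤ p := by
  obtain ⟨a, ha, hap⟩ := (eq_bot_or_exists_atom_le p).resolve_left hp
  have haSoc : a ≤ Socle R M := by
    have := isSimpleModule_iff_isAtom.mpr ha
    exact le_iSup₂ (f := fun (q : Submodule R M) (_ : IsSimpleModule R q) => q) a this
  rw [← (isSimpleModule_iff_isAtom.mp hsoc).le_iff_eq ha.1 |>.mp haSoc]
  exact hap

theorem le_rad_of_ne_top_s2 [IsNoetherian R M] (hrad : IsCoatom (Rad R M))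
    {p : Submodule R M} (hp : p ≠ ⊤) : p ≤ Rad R M := by
  obtain ⟨m, hm, hpm⟩ := (eq_top_or_exists_le_coatom p).resolve_left hp
  rwa [← hrad.le_iff_eq hm.1 |>.mp (sInf_le hm)]

theorem Module.Injective.exists_comp_eq_of_ker_le [Module.Injective R N]
    (h : M →ₗ[R] X) (θ : M →ₗ[R] N) (hker : LinearMap.ker h ≤ LinearMap.ker θ) :
    ∃ g : X →ₗ[R] N, g ∘ₗ h = θ := by
  obtain ⟨g, hg⟩ := Module.Injective.out ((LinearMap.ker h).liftQ h le_rfl)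
    (LinearMap.ker_eq_bot.mp (Submodule.ker_liftQ_eq_bot _ _ _ le_rfl))
    ((LinearMap.ker h).liftQ θ hker)
  exact ⟨g, LinearMap.ext fun m => hg (Submodule.Quotient.mk m)⟩

theorem Module.Projective.exists_comp_eq_of_range_le [Module.Projective R M]
    (h : X →ₗ[R] N) (θ : M →ₗ[R] N) (hrange : LinearMap.range θ ≤ LinearMap.range h) :
    ∃ g : M →ₗ[R] X, h ∘ₗ g = θ := by
  obtain ⟨g, hg⟩ := Module.projective_lifting_property h.rangeRestrict
    (θ.codRestrict _ fun m => hrange (LinearMap.mem_range_self θ m)) h.surjective_rangeRestrict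
  exact ⟨g, LinearMap.ext fun m => congr(($hg m).1)⟩

theorem exists_comp_eq_of_isCoatom_rad [IsNoetherian R M] [Module.Injective R N]
    (hrad : IsCoatom (Rad R M)) (θ : M →ₗ[R] N) (hθ : IsSimpleModule R (LinearMap.range θ))
    (h : M →ₗ[R] X) (hh : h ≠ 0) : ∃ g : X →ₗ[R] N, g ∘ₗ h = θ := by
  have hkerθ : IsCoatom (LinearMap.ker θ) :=
    θ.ker_rangeRestrict ▸ LinearMap.isCoatom_ker_of_surjective θ.surjective_rangeRestrict
  refine Module.Injective.exists_comp_eq_of_ker_le h θ ?_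
  exact (le_rad_of_ne_top_s2 hrad (mt LinearMap.ker_eq_top.mp hh)).trans (sInf_le hkerθ)

theorem exists_comp_eq_of_isSimpleModule_socle [IsArtinian R N] [Module.Projective R M]
    (hsoc : IsSimpleModule R (Socle R N)) (θ : M →ₗ[R] N)
    (hθ : LinearMap.range θ ≤ Socle R N)
    (h : X →ₗ[R] N) (hh : h ≠ 0) : ∃ g : M →ₗ[R] X, h ∘ₗ g = θ :=
  Module.Projective.exists_comp_eq_of_range_le h θ
    (hθ.trans (socle_le_of_ne_bot_s2 hsoc (mt LinearMap.range_eq_bot.mp hh)))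

end Factorization

namespace Blocks
variable {R : Type} [Ring R] {ι : Type} [DecidableEq ι]
  {P : ι → Type} [∀ i, AddCommGroup (P i)] [∀ i, Module R (P i)]

noncomputable def block (u v : ι) (x : Module.End R (DirectSum ι P)) : P u →ₗ[R] P v :=
  DirectSum.component R ι P v ∘ₗ x ∘ₗ DirectSum.lof R ι P u

theorem block_emb (u v : ι) (f : P u →ₗ[R] P v) : block u v (emb R ι P u v f) = f := by
  ext p; simp [block, emb]

theorem block_emb_of_ne {u v u' v' : ι} (h : u ≠ u' ∨ v ≠ v') (f : P u' →ₗ[R] P v') :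
    block u v (emb R ι P u' v' f) = 0 := by
  ext p
  rcases h with h | h <;> simp [block, emb, DirectSum.component.of, h, Ne.symm h]

theorem emb_zero (u v : ι) : emb R ι P u v 0 = 0 := by
  ext p; simp [emb]

theorem eq_of_emb_eq {u v u' v' : ι} {f : P u →ₗ[R] P v} {f' : P u' →ₗ[R] P v'}
    (hf : f ≠ 0) (h : emb R ι P u v f = emb R ι P u' v' f') : u = u' ∧ v = v' := by
  by_contra hne
  rw [not_and_or] at hne
  exact hf (by rw [← block_emb u v f, h, block_emb_of_ne hne])

theorem emb_mul_emb (u v w : ι) (f : P v →ₗ[R] P w) (g : P u →ₗ[R] P v) :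
    emb R ι P v w f * emb R ι P u v g = emb R ι P u w (f ∘ₗ g) := by
  ext p; simp [emb, Module.End.mul_eq_comp, DirectSum.component.of]

theorem emb_mul_emb_of_ne {u v u' v' : ι} (h : v' ≠ u) (f : P u →ₗ[R] P v)
    (g : P u' →ₗ[R] P v') : emb R ι P u v f * emb R ι P u' v' g = 0 := by
  ext p; simp [emb, Module.End.mul_eq_comp, DirectSum.component.of, h]

theorem exists_block_ne_zero {x : Module.End R (DirectSum ι P)} (hx : x ≠ 0) :
    ∃ u v, block u v x ≠ 0 := by
  by_contra! h
  refine hx (DirectSum.linearMap_ext R fun u => LinearMap.ext fun p => ?_)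
  exact DirectSum.ext_component R fun v => by simpa [block] using congr($(h u v) p)

variable (K : Type) [CommSemiring K] [Algebra K R]
  [∀ i, Module K (P i)] [∀ i, IsScalarTower K R (P i)] [∀ i, SMulCommClass R K (P i)]

noncomputable def corner (u v : ι) :
    Module.End R (DirectSum ι P) →ₗ[K] Module.End R (DirectSum ι P) where
  toFun x := emb R ι P u v (block u v x)
  map_add' x y := by ext p; simp [emb, block]
  map_smul' c x := by ext p; simp [emb, block, LinearMap.map_smul_of_tower]

theorem corner_emb (u v : ι) (f : P u →ₗ[R] P v) :
    corner K u v (emb R ι P u v f) = emb R ι P u v f := by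
  simp [corner, block_emb]

theorem corner_emb_of_ne {u v u' v' : ι} (h : u ≠ u' ∨ v ≠ v') (f : P u' →ₗ[R] P v') :
    corner K u v (emb R ι P u' v' f) = 0 := by
  simp [corner, block_emb_of_ne h, emb_zero]

theorem corner_apply (u v : ι) (x : Module.End R (DirectSum ι P)) :
    corner K u v x = emb R ι P u v (block u v x) := rfl

variable {K} {κ : Type} (b : Module.Basis κ K (Module.End R (DirectSum ι P)))
  (tr : Module.End R (DirectSum ι P) →ₗ[K] K)

theorem tr_emb_eq_zero_of_ne [Nontrivial K] (hblock : ∀ i, ∃ u v f, b i = emb R ι P u v f)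
    (pr : ι → ι) (θ : ∀ u, P u →ₗ[R] P (pr u))
    (htr0 : ∀ i, (¬ ∃ u, b i = emb R ι P u (pr u) (θ u)) → tr (b i) = 0)
    {u v : ι} (hv : v ≠ pr u) (k : P u →ₗ[R] P v) : tr (emb R ι P u v k) = 0 := by
  have htr : tr ∘ₗ corner K u v = 0 := b.ext fun i => by
    obtain ⟨s, t, f, hi⟩ := hblock i
    by_cases hst : u = s ∧ v = t
    · obtain ⟨rfl, rfl⟩ := hst
      have hf : f ≠ 0 := by rintro rfl; exact b.ne_zero i (hi.trans (emb_zero u v))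
      rw [LinearMap.comp_apply, hi, corner_emb, ← hi, LinearMap.zero_apply]
      refine htr0 i fun ⟨s', hs'⟩ => hv ?_
      obtain ⟨rfl, rfl⟩ := eq_of_emb_eq hf (hi.symm.trans hs')
      rfl
    · simp [hi, corner_emb_of_ne K (not_and_or.mp hst)]
  simpa [corner_emb] using congr($htr (emb R ι P u v k))

theorem tr_emb_mul (hblock : ∀ i, ∃ u v f, b i = emb R ι P u v f) (pr : ι → ι)
    (hpr : Function.Injective pr)
    (hoff : ∀ u v (k : P u →ₗ[R] P v), v ≠ pr u → tr (emb R ι P u v k) = 0)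
    (s t : ι) (g : P t →ₗ[R] P (pr s)) (z : Module.End R (DirectSum ι P)) :
    tr (emb R ι P t (pr s) g * z) = tr (emb R ι P t (pr s) g * corner K s t z) := by
  set a := emb R ι P t (pr s) g
  suffices tr ∘ₗ LinearMap.mulLeft K a = (tr ∘ₗ LinearMap.mulLeft K a) ∘ₗ corner K s t from
    congr($this z)
  refine b.ext fun i => ?_
  obtain ⟨s', t', f, hi⟩ := hblock i
  simp only [LinearMap.comp_apply, LinearMap.mulLeft_apply, hi]
  by_cases hst : s = s' ∧ t = t'
  · obtain ⟨rfl, rfl⟩ := hst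
    rw [corner_emb]
  rw [corner_emb_of_ne K (not_and_or.mp hst), mul_zero, map_zero]
  by_cases ht : t' = t
  · subst ht
    have hs : s ≠ s' := fun h => hst ⟨h, rfl⟩
    rw [emb_mul_emb]
    exact hoff _ _ _ (hpr.ne hs)
  · rw [emb_mul_emb_of_ne ht, map_zero]

theorem tr_mul_emb (hblock : ∀ i, ∃ u v f, b i = emb R ι P u v f) (pr : ι → ι)
    (hoff : ∀ u v (k : P u →ₗ[R] P v), v ≠ pr u → tr (emb R ι P u v k) = 0)
    (s u : ι) (g : P u →ₗ[R] P s) (z : Module.End R (DirectSum ι P)) :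
    tr (z * emb R ι P u s g) = tr (corner K s (pr u) z * emb R ι P u s g) := by
  set a := emb R ι P u s g
  suffices
      tr ∘ₗ LinearMap.mulRight K a = (tr ∘ₗ LinearMap.mulRight K a) ∘ₗ corner K s (pr u) from
    congr($this z)
  refine b.ext fun i => ?_
  obtain ⟨s', t', f, hi⟩ := hblock i
  simp only [LinearMap.comp_apply, LinearMap.mulRight_apply, hi]
  by_cases hst : s = s' ∧ pr u = t'
  · obtain ⟨rfl, rfl⟩ := hst
    rw [corner_emb]
  rw [corner_emb_of_ne K (not_and_or.mp hst), zero_mul, map_zero]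
  by_cases hs : s = s'
  · subst hs
    have ht : t' ≠ pr u := fun h => hst ⟨rfl, h.symm⟩
    rw [emb_mul_emb]
    exact hoff _ _ _ ht
  · rw [emb_mul_emb_of_ne hs, map_zero]

theorem exists_tr_mul_ne_zero (hblock : ∀ i, ∃ u v f, b i = emb R ι P u v f) (pr : ι → ι)
    (hpr : Function.Bijective pr)
    (hoff : ∀ u v (k : P u →ₗ[R] P v), v ≠ pr u → tr (emb R ι P u v k) = 0)
    (θ : ∀ u, P u →ₗ[R] P (pr u)) (hθ : ∀ u, tr (emb R ι P u (pr u) (θ u)) ≠ 0)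
    (hfacL : ∀ s t (h : P s →ₗ[R] P t), h ≠ 0 →
      ∃ g : P t →ₗ[R] P (pr s), g ∘ₗ h = θ s)
    (hfacR : ∀ s u (h : P s →ₗ[R] P (pr u)), h ≠ 0 →
      ∃ g : P u →ₗ[R] P s, h ∘ₗ g = θ u)
    {x : Module.End R (DirectSum ι P)} (hx : x ≠ 0) :
    (∃ y, tr (x * y) ≠ 0) ∧ (∃ y, tr (y * x) ≠ 0) := by
  obtain ⟨s, t, hst⟩ := exists_block_ne_zero hx
  obtain ⟨u, rfl⟩ := hpr.2 t
  obtain ⟨g, hg⟩ := hfacR s u _ hst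
  obtain ⟨g', hg'⟩ := hfacL s (pr u) _ hst
  refine ⟨⟨emb R ι P u s g, ?_⟩, ⟨emb R ι P (pr u) (pr s) g', ?_⟩⟩
  · rw [tr_mul_emb b tr hblock pr hoff, corner_apply, emb_mul_emb, hg]
    exact hθ u
  · rw [tr_emb_mul b tr hblock pr hpr.1 hoff, corner_apply, emb_mul_emb, hg']
    exact hθ s

end Blocks

theorem stmt_2_general
    (K A : Type) [Field K] [Ring A] [Algebra K A]
    (Lam : Type) [DecidableEq Lam] (L P : Lam → Type)
    [∀ l, AddCommGroup (L l)] [∀ l, Module A (L l)]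
    [∀ l, AddCommGroup (P l)] [∀ l, Module A (P l)] [∀ l, Module K (P l)]
    [∀ l, IsScalarTower K A (P l)] [∀ l, SMulCommClass A K (P l)]
    [∀ l, FiniteDimensional K (P l)]
    (hsimple : ∀ l, IsSimpleModule A (L l))
    (hproj : ∀ l, Module.Projective A (P l))
    (hcover : ∀ l, ∃ π : P l →ₗ[A] L l, Function.Surjective π ∧ LinearMap.ker π = Rad A (P l))
    -- the map ' on Λ₀ = {l | P l injective}, an involution, with soc(P^λ) ≅ L^{λ'}
    (pr : ∀ s : {l : Lam // Module.Injective A (P l)}, {l : Lam // Module.Injective A (P l)})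
    (hpr : ∀ s, Nonempty (↥(Socle A (P s.1)) ≃ₗ[A] L (pr s).1))
    (hprinv : ∀ s, pr (pr s) = s)
    -- the fixed maps θ_λ : P^λ → P^{λ'} with image soc(P^{λ'})
    (θ : ∀ s : {l : Lam // Module.Injective A (P l)}, P s.1 →ₗ[A] P (pr s).1)
    (hθ : ∀ s, LinearMap.range (θ s) = Socle A (P (pr s).1))
    -- an appropriate basis of B = End_A(⊕_{λ ∈ Λ₀} P^λ)
    (ι : Type) (b : Module.Basis ι K (Module.End A
      (DirectSum {l : Lam // Module.Injective A (P l)} (fun s => P s.1))))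
    (hblock : ∀ i : ι, ∃ s t : {l : Lam // Module.Injective A (P l)},
      ∃ f : P s.1 →ₗ[A] P t.1,
        b i = emb A {l : Lam // Module.Injective A (P l)} (fun s => P s.1) s t f)
    (hθin : ∀ s, ∃ i : ι,
      b i = emb A {l : Lam // Module.Injective A (P l)} (fun s => P s.1) s (pr s) (θ s))
    -- the canonical form tr attached to the basis b
    (tr : Module.End A (DirectSum {l : Lam // Module.Injective A (P l)} (fun s => P s.1)) →ₗ[K] K)
    (htr1 : ∀ i : ι, (∃ s, b i =
        emb A {l : Lam // Module.Injective A (P l)} (fun s => P s.1) s (pr s) (θ s)) →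
      tr (b i) = 1)
    (htr0 : ∀ i : ι, (¬ ∃ s, b i =
        emb A {l : Lam // Module.Injective A (P l)} (fun s => P s.1) s (pr s) (θ s)) →
      tr (b i) = 0) :
    ∀ x : Module.End A (DirectSum {l : Lam // Module.Injective A (P l)} (fun s => P s.1)),
      x ≠ 0 → (∃ y, tr (x * y) ≠ 0) ∧ (∃ y, tr (y * x) ≠ 0) := by
  intro x hx
  have hSocle (s : {l : Lam // Module.Injective A (P l)}) : IsSimpleModule A (Socle A (P s.1)) :=
    have := hsimple (pr s).1
    IsSimpleModule.congr (hpr s).some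
  have hRad : ∀ l, IsCoatom (Rad A (P l)) := fun l => by
    obtain ⟨π, hπ, hker⟩ := hcover l
    have := hsimple l
    exact hker ▸ LinearMap.isCoatom_ker_of_surjective hπ
  refine Blocks.exists_tr_mul_ne_zero b tr hblock pr (Function.Involutive.bijective hprinv)
    (fun u v k hv => Blocks.tr_emb_eq_zero_of_ne b tr hblock pr θ htr0 hv k) θ
    (fun s => by obtain ⟨i, hi⟩ := hθin s; rw [← hi, htr1 i ⟨s, hi⟩]; exact one_ne_zero)
    (fun s t h hh => ?_) (fun s u h hh => ?_) hx
  · have : IsNoetherian A (P s.1) := isNoetherian_of_tower K inferInstance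
    have := (pr s).2
    exact exists_comp_eq_of_isCoatom_rad (hRad s.1) (θ s) (hθ s ▸ hSocle (pr s)) h hh
  · have : IsArtinian A (P (pr u).1) := isArtinian_of_tower K inferInstance
    have := hproj u.1
    exact exists_comp_eq_of_isSimpleModule_socle (hSocle (pr u)) (θ u) (hθ u).le h hh

/-- With `λ ↦ λ'` an involution on `Λ₀`, the endomorphism algebra
`B = End_A(⊕_{λ∈Λ₀} P^λ)` equipped with the canonical form `tr` attached to an appropriate
basis (value `1` on each `θ_λ`, `0` on other basis elements) has non-degenerate associated
bilinear form `(f,g) ↦ tr (f * g)`; in particular `B` is a Frobenius algebra. -/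
theorem stmt_2
    (K A : Type) [Field K] [IsAlgClosed K] [Ring A] [Algebra K A] [FiniteDimensional K A]
    (Lam : Type) [DecidableEq Lam] (L P : Lam → Type)
    [∀ l, AddCommGroup (L l)] [∀ l, Module A (L l)] [∀ l, Module K (L l)]
    [∀ l, IsScalarTower K A (L l)] [∀ l, FiniteDimensional K (L l)]
    [∀ l, AddCommGroup (P l)] [∀ l, Module A (P l)] [∀ l, Module K (P l)]
    [∀ l, IsScalarTower K A (P l)] [∀ l, SMulCommClass A K (P l)]
    [∀ l, FiniteDimensional K (P l)]
    (hsimple : ∀ l, IsSimpleModule A (L l))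
    (hdistinct : ∀ l m, Nonempty (L l ≃ₗ[A] L m) → l = m)
    (hproj : ∀ l, Module.Projective A (P l))
    (hcover : ∀ l, ∃ π : P l →ₗ[A] L l, Function.Surjective π ∧ LinearMap.ker π = Rad A (P l))
    -- the map ' on Λ₀ = {l | P l injective}, an involution, with soc(P^λ) ≅ L^{λ'}
    (pr : ∀ s : {l : Lam // Module.Injective A (P l)}, {l : Lam // Module.Injective A (P l)})
    (hpr : ∀ s, Nonempty (↥(Socle A (P s.1)) ≃ₗ[A] L (pr s).1))
    (hprinv : ∀ s, pr (pr s) = s)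
    -- the fixed maps θ_λ : P^λ → P^{λ'} with image soc(P^{λ'})
    (θ : ∀ s : {l : Lam // Module.Injective A (P l)}, P s.1 →ₗ[A] P (pr s).1)
    (hθ : ∀ s, LinearMap.range (θ s) = Socle A (P (pr s).1))
    -- an appropriate basis of B = End_A(⊕_{λ ∈ Λ₀} P^λ)
    (ι : Type) (b : Module.Basis ι K (Module.End A
      (DirectSum {l : Lam // Module.Injective A (P l)} (fun s => P s.1))))
    (hblock : ∀ i : ι, ∃ s t : {l : Lam // Module.Injective A (P l)},
      ∃ f : P s.1 →ₗ[A] P t.1,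
        b i = emb A {l : Lam // Module.Injective A (P l)} (fun s => P s.1) s t f)
    (hθin : ∀ s, ∃ i : ι,
      b i = emb A {l : Lam // Module.Injective A (P l)} (fun s => P s.1) s (pr s) (θ s))
    -- the canonical form tr attached to the basis b
    (tr : Module.End A (DirectSum {l : Lam // Module.Injective A (P l)} (fun s => P s.1)) →ₗ[K] K)
    (htr1 : ∀ i : ι, (∃ s, b i =
        emb A {l : Lam // Module.Injective A (P l)} (fun s => P s.1) s (pr s) (θ s)) →
      tr (b i) = 1)
    (htr0 : ∀ i : ι, (¬ ∃ s, b i =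
        emb A {l : Lam // Module.Injective A (P l)} (fun s => P s.1) s (pr s) (θ s)) →
      tr (b i) = 0) :
    ∀ x : Module.End A (DirectSum {l : Lam // Module.Injective A (P l)} (fun s => P s.1)),
      x ≠ 0 → (∃ y, tr (x * y) ≠ 0) ∧ (∃ y, tr (y * x) ≠ 0) :=
  stmt_2_general K A Lam L P hsimple hproj hcover pr hpr hprinv θ hθ ι b hblock hθin tr htr1 htr0
end

section
/- Let A be a finite-dimensional algebra over an algebraically closed field K with Λ₀ as above and λ ↦ λ' an involution on Λ₀. If there exists a symmetrizing form τ on B = End_A(⊕_{λ∈Λ₀} P^λ), then: (i) λ' = λ and τ(θ_λ) ≠ 0 for all λ ∈ Λ₀; (ii) τ(f) = 0 for every f ∈ Hom_A(P^λ, P^μ) with λ ≠ μ in Λ₀. -/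
open LinearMap

section SimpleTop

variable {A : Type} [Ring A] {M N T : Type}
  [AddCommGroup M] [Module A M] [AddCommGroup N] [Module A N] [AddCommGroup T] [Module A T]

theorem rad_le_ker_of_isSimpleModule [IsSimpleModule A N] (f : M →ₗ[A] N) : Rad A M ≤ ker f := by
  rcases f.surjective_or_eq_zero with hf | rfl
  · exact sInf_le (isCoatom_ker_of_surjective hf)
  · simp

theorem ne_zero_of_isSimpleModule_range (f : M →ₗ[A] N) [h : IsSimpleModule A (range f)] :
    f ≠ 0 := fun hf => (isSimpleModule_iff_isAtom.mp h).1 (by rw [hf, range_zero])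

theorem exists_comp_eq_of_ker_eq_rad {π : M →ₗ[A] T} (hπ : Function.Surjective π)
    (hker : ker π = Rad A M) [IsSimpleModule A N] (f : M →ₗ[A] N) :
    ∃ f' : T →ₗ[A] N, f' ∘ₗ π = f := by
  refine ⟨(ker π).liftQ f (hker ▸ rad_le_ker_of_isSimpleModule f) ∘ₗ
    (π.quotKerEquivOfSurjective hπ).symm.toLinearMap, ?_⟩
  ext x
  simp

theorem comp_eq_zero_of_isEmpty_linearEquiv {M₁ M₂ T₁ T₂ : Type}
    [AddCommGroup M₁] [Module A M₁] [AddCommGroup M₂] [Module A M₂]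
    [AddCommGroup T₁] [Module A T₁] [AddCommGroup T₂] [Module A T₂]
    [IsSimpleModule A T₁] [IsSimpleModule A T₂]
    {π₁ : M₁ →ₗ[A] T₁} (hπ₁ : Function.Surjective π₁) (hker₁ : ker π₁ = Rad A M₁)
    {π₂ : M₂ →ₗ[A] T₂} (hπ₂ : Function.Surjective π₂) (hker₂ : ker π₂ = Rad A M₂)
    (hT : IsEmpty (T₁ ≃ₗ[A] T₂)) (θ : M₂ →ₗ[A] N) [IsSimpleModule A (range θ)]
    (g : M₁ →ₗ[A] M₂) : θ ∘ₗ g = 0 := by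
  obtain ⟨θ', hθ'⟩ := exists_comp_eq_of_ker_eq_rad hπ₂ hker₂ θ.rangeRestrict
  obtain ⟨g', hg'⟩ := exists_comp_eq_of_ker_eq_rad hπ₁ hker₁ (π₂ ∘ₗ g)
  have hg'0 : g' = 0 :=
    g'.bijective_or_eq_zero.resolve_left fun hb => hT.false (.ofBijective g' hb)
  ext x
  have hθx : θ' (π₂ (g x)) = θ.rangeRestrict (g x) := congr($hθ' (g x))
  have hgx : π₂ (g x) = 0 := by simpa [hg'0] using congr($hg' x).symm
  simpa [hgx] using congr(Subtype.val $hθx).symm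

variable (K : Type) [Field K] [IsAlgClosed K] [Algebra K A]

theorem Module.End.exists_eq_smul_one_of_isSimpleModule [Module K N] [IsScalarTower K A N]
    [FiniteDimensional K N] [IsSimpleModule A N] (E : Module.End A N) :
    ∃ c : K, E = c • 1 := by
  have := IsSimpleModule.nontrivial A N
  obtain ⟨c, hc⟩ := Module.End.exists_eigenvalue (E.restrictScalars K)
  obtain ⟨v, hv⟩ := hc.exists_hasEigenvector
  refine ⟨c, sub_eq_zero.mp <| (E - c • 1).injective_or_eq_zero.resolve_left fun hinj => hv.2 ?_⟩
  apply hinj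
  simpa [sub_eq_zero] using hv.apply_eq_smul

theorem exists_eq_smul_of_isSimpleModule [Module K N] [IsScalarTower K A N]
    [FiniteDimensional K N] [IsSimpleModule A N] [IsSimpleModule A T]
    (f g : T →ₗ[A] N) (hg : g ≠ 0) : ∃ c : K, f = c • g := by
  let e := LinearEquiv.ofBijective g (bijective_of_ne_zero hg)
  obtain ⟨c, hc⟩ := Module.End.exists_eq_smul_one_of_isSimpleModule K (f ∘ₗ e.symm.toLinearMap)
  refine ⟨c, ext fun x => ?_⟩
  simpa [e] using congr($hc (g x))

theorem exists_eq_smul_of_range_le [Module K N] [IsScalarTower K A N] [FiniteDimensional K N]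
    [IsSimpleModule A T] {π : M →ₗ[A] T} (hπ : Function.Surjective π) (hker : ker π = Rad A M)
    (ψ φ : M →ₗ[A] N) [IsSimpleModule A (range ψ)] (hφ : range φ ≤ range ψ) :
    ∃ c : K, φ = c • ψ := by
  have : FiniteDimensional K (range ψ) :=
    Module.Finite.of_injective ((range ψ).subtype.restrictScalars K) Subtype.val_injective
  obtain ⟨ψ', hψ'⟩ := exists_comp_eq_of_ker_eq_rad hπ hker ψ.rangeRestrict
  obtain ⟨φ', hφ'⟩ :=
    exists_comp_eq_of_ker_eq_rad hπ hker (φ.codRestrict (range ψ) fun x => hφ ⟨x, rfl⟩)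
  have hψ'0 : ψ' ≠ 0 := by
    rintro rfl
    refine ne_zero_of_isSimpleModule_range ψ (ext fun x => ?_)
    simpa using congr(Subtype.val ($hψ' x)).symm
  obtain ⟨c, hc⟩ := exists_eq_smul_of_isSimpleModule K φ' ψ' hψ'0
  refine ⟨c, ext fun x => ?_⟩
  have hφx := congr(Subtype.val ($hφ' x))
  have hψx := congr(Subtype.val ($hψ' x))
  simp only [hc, comp_apply, LinearMap.smul_apply] at hφx hψx
  simpa [hψx] using hφx.symm

end SimpleTop

section DirectSumEnd

variable {A : Type} [Ring A] {ι : Type} [DecidableEq ι]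
  {Q : ι → Type} [∀ i, AddCommGroup (Q i)] [∀ i, Module A (Q i)]

theorem emb_mul_emb {a b c : ι} (f : Q b →ₗ[A] Q c) (g : Q a →ₗ[A] Q b) :
    emb A ι Q b c f * emb A ι Q a b g = emb A ι Q a c (f ∘ₗ g) := by
  ext i x
  simp [emb, Module.End.mul_apply]

theorem emb_mul_emb_of_ne {a b c d : ι} (h : b ≠ c) (f : Q c →ₗ[A] Q d) (g : Q a →ₗ[A] Q b) :
    emb A ι Q c d f * emb A ι Q a b g = 0 := by
  ext i x
  simp [emb, Module.End.mul_apply, DirectSum.component.of, h]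

theorem emb_eq_zero_iff {s t : ι} (f : Q s →ₗ[A] Q t) : emb A ι Q s t f = 0 ↔ f = 0 := by
  refine ⟨fun h => ext fun x => ?_, fun h => by ext; simp [emb, h]⟩
  simpa [emb] using congr(DirectSum.component A ι Q t ($h (DirectSum.lof A ι Q s x)))

theorem emb_smul {K : Type} [Field K] [Algebra K A] [∀ i, Module K (Q i)]
    [∀ i, IsScalarTower K A (Q i)] [∀ i, SMulCommClass A K (Q i)]
    {s t : ι} (c : K) (f : Q s →ₗ[A] Q t) : emb A ι Q s t (c • f) = c • emb A ι Q s t f := by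
  ext i x
  simp [emb]

theorem emb_id_mul_mul_emb_id (s t : ι) (y : Module.End A (DirectSum ι Q)) :
    emb A ι Q s s .id * y * emb A ι Q t t .id =
      emb A ι Q t s (DirectSum.component A ι Q s ∘ₗ y ∘ₗ DirectSum.lof A ι Q t) :=
  rfl

theorem apply_emb_eq_apply_zero_of_ne {R : Type} (τ : Module.End A (DirectSum ι Q) → R)
    (hτ : ∀ x y, τ (x * y) = τ (y * x)) {s t : ι} (hst : s ≠ t) (f : Q s →ₗ[A] Q t) :
    τ (emb A ι Q s t f) = τ 0 := by
  calc τ (emb A ι Q s t f) = τ (emb A ι Q t t .id * emb A ι Q s t f) := by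
        rw [emb_mul_emb, id_comp]
    _ = τ 0 := by rw [hτ, emb_mul_emb_of_ne hst.symm]

theorem exists_apply_emb_mul_eq {R : Type} (τ : Module.End A (DirectSum ι Q) → R)
    (hτ : ∀ x y, τ (x * y) = τ (y * x)) {s t : ι} (f : Q s →ₗ[A] Q t)
    (y : Module.End A (DirectSum ι Q)) :
    ∃ g : Q t →ₗ[A] Q s, τ (emb A ι Q s t f * y) = τ (emb A ι Q t t (f ∘ₗ g)) := by
  refine ⟨DirectSum.component A ι Q s ∘ₗ y ∘ₗ DirectSum.lof A ι Q t, ?_⟩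
  calc τ (emb A ι Q s t f * y)
      = τ (emb A ι Q t t .id * (emb A ι Q s t f * emb A ι Q s s .id * y)) := by
        rw [emb_mul_emb, ← mul_assoc, emb_mul_emb, id_comp, comp_id]
    _ = τ (emb A ι Q s t f * (emb A ι Q s s .id * y * emb A ι Q t t .id)) := by
        rw [hτ]; simp only [mul_assoc]
    _ = _ := by rw [emb_id_mul_mul_emb_id, emb_mul_emb]

theorem apply_emb_mul_eq_apply_zero {R : Type} (τ : Module.End A (DirectSum ι Q) → R)
    (hτ : ∀ x y, τ (x * y) = τ (y * x)) {s t : ι} {T₁ T₂ : Type}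
    [AddCommGroup T₁] [Module A T₁] [AddCommGroup T₂] [Module A T₂]
    [IsSimpleModule A T₁] [IsSimpleModule A T₂]
    {π₁ : Q s →ₗ[A] T₁} (hπ₁ : Function.Surjective π₁) (hker₁ : ker π₁ = Rad A (Q s))
    {π₂ : Q t →ₗ[A] T₂} (hπ₂ : Function.Surjective π₂) (hker₂ : ker π₂ = Rad A (Q t))
    (hT : IsEmpty (T₂ ≃ₗ[A] T₁)) (θ : Q s →ₗ[A] Q t) [IsSimpleModule A (range θ)]
    (y : Module.End A (DirectSum ι Q)) : τ (emb A ι Q s t θ * y) = τ 0 := by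
  obtain ⟨g, hg⟩ := exists_apply_emb_mul_eq τ hτ θ y
  rw [hg, comp_eq_zero_of_isEmpty_linearEquiv hπ₂ hker₂ hπ₁ hker₁ hT θ g,
    (emb_eq_zero_iff _).mpr rfl]

theorem apply_emb_ne_zero {K : Type} [Field K] [IsAlgClosed K] [Algebra K A]
    [∀ i, Module K (Q i)] [∀ i, IsScalarTower K A (Q i)] [∀ i, SMulCommClass A K (Q i)]
    (τ : Module.End A (DirectSum ι Q) →ₗ[K] K) (hτ : ∀ x y, τ (x * y) = τ (y * x))
    (hnd : ∀ x, x ≠ 0 → ∃ y, τ (x * y) ≠ 0) {u : ι} [FiniteDimensional K (Q u)]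
    {T : Type} [AddCommGroup T] [Module A T] [IsSimpleModule A T]
    {π : Q u →ₗ[A] T} (hπ : Function.Surjective π) (hker : ker π = Rad A (Q u))
    (ψ : Q u →ₗ[A] Q u) [IsSimpleModule A (range ψ)] : τ (emb A ι Q u u ψ) ≠ 0 := by
  intro hψ
  obtain ⟨y, hy⟩ := hnd _ ((emb_eq_zero_iff ψ).not.mpr (ne_zero_of_isSimpleModule_range ψ))
  obtain ⟨g, hg⟩ := exists_apply_emb_mul_eq τ hτ ψ y
  obtain ⟨c, hc⟩ := exists_eq_smul_of_range_le K hπ hker ψ (ψ ∘ₗ g) (range_comp_le_range g ψ)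
  exact hy (by rw [hg, hc, emb_smul, map_smul, hψ, smul_zero])

end DirectSumEnd

theorem stmt_3_general
    (K A : Type) [Field K] [IsAlgClosed K] [Ring A] [Algebra K A]
    (Lam : Type) [DecidableEq Lam] (L P : Lam → Type)
    [∀ l, AddCommGroup (L l)] [∀ l, Module A (L l)]
    [∀ l, AddCommGroup (P l)] [∀ l, Module A (P l)] [∀ l, Module K (P l)]
    [∀ l, IsScalarTower K A (P l)] [∀ l, SMulCommClass A K (P l)]
    [∀ l, FiniteDimensional K (P l)]
    (hsimple : ∀ l, IsSimpleModule A (L l))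
    (hdistinct : ∀ l m, Nonempty (L l ≃ₗ[A] L m) → l = m)
    (hcover : ∀ l, ∃ π : P l →ₗ[A] L l, Function.Surjective π ∧ LinearMap.ker π = Rad A (P l))
    -- the map ' on Λ₀ = {l | P l injective}, an involution, with soc(P^λ) ≅ L^{λ'}
    (pr : ∀ s : {l : Lam // Module.Injective A (P l)}, {l : Lam // Module.Injective A (P l)})
    (hpr : ∀ s, Nonempty (↥(Socle A (P s.1)) ≃ₗ[A] L (pr s).1))
    -- the fixed nonzero maps θ_λ : P^λ → P^{λ'} with image soc(P^{λ'})
    (θ : ∀ s : {l : Lam // Module.Injective A (P l)}, P s.1 →ₗ[A] P (pr s).1)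
    (hθ : ∀ s, LinearMap.range (θ s) = Socle A (P (pr s).1))
    -- a symmetrizing form τ on B = End_A(⊕_{λ∈Λ₀} P^λ)
    (τ : Module.End A (DirectSum {l : Lam // Module.Injective A (P l)} (fun s => P s.1)) →ₗ[K] K)
    (hsymm : ∀ x y, τ (x * y) = τ (y * x))
    (hnd : ∀ x, x ≠ 0 → ∃ y, τ (x * y) ≠ 0) :
    (∀ s, pr s = s ∧
      τ (emb A {l : Lam // Module.Injective A (P l)} (fun s => P s.1) s (pr s) (θ s)) ≠ 0) ∧
    (∀ s t, s ≠ t → ∀ f : P s.1 →ₗ[A] P t.1,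
      τ (emb A {l : Lam // Module.Injective A (P l)} (fun s => P s.1) s t f) = 0) := by
  choose π hπ hker using hcover
  have hθ_simple : ∀ s, IsSimpleModule A (range (θ s)) :=
    fun s => hθ s ▸ .congr (hpr (pr s)).some
  have hfix : ∀ s, pr s = s := by
    intro s
    by_contra hne
    have hL : IsEmpty (L (pr s).1 ≃ₗ[A] L s.1) := ⟨fun e => hne (Subtype.ext (hdistinct _ _ ⟨e⟩))⟩
    obtain ⟨y, hy⟩ := hnd _ ((emb_eq_zero_iff _).not.mpr (ne_zero_of_isSimpleModule_range (θ s)))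
    apply hy
    rw [apply_emb_mul_eq_apply_zero τ hsymm (hπ _) (hker _) (hπ _) (hker _) hL, map_zero]
  refine ⟨fun s => ⟨hfix s, ?_⟩, fun s t hst f => ?_⟩
  · have key : ∀ t (ψ : P s.1 →ₗ[A] P t.1), t = s → IsSimpleModule A (range ψ) →
        τ (emb _ _ _ s t ψ) ≠ 0 := by
      rintro t ψ rfl _
      exact apply_emb_ne_zero τ hsymm hnd (hπ _) (hker _) ψ
    exact key _ (θ s) (hfix s) (hθ_simple s)
  · rw [apply_emb_eq_apply_zero_of_ne τ hsymm hst f, map_zero]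

/-- If there exists a symmetrizing form `τ` on `B = End_A(⊕_{λ∈Λ₀} P^λ)`,
then (i) `λ' = λ` and `τ(θ_λ) ≠ 0` for all `λ ∈ Λ₀`, and (ii) `τ(f) = 0` for every
`f ∈ Hom_A(P^λ, P^μ)` with `λ ≠ μ` in `Λ₀`. -/
theorem stmt_3
    (K A : Type) [Field K] [IsAlgClosed K] [Ring A] [Algebra K A] [FiniteDimensional K A]
    (Lam : Type) [DecidableEq Lam] (L P : Lam → Type)
    [∀ l, AddCommGroup (L l)] [∀ l, Module A (L l)] [∀ l, Module K (L l)]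
    [∀ l, IsScalarTower K A (L l)] [∀ l, FiniteDimensional K (L l)]
    [∀ l, AddCommGroup (P l)] [∀ l, Module A (P l)] [∀ l, Module K (P l)]
    [∀ l, IsScalarTower K A (P l)] [∀ l, SMulCommClass A K (P l)]
    [∀ l, FiniteDimensional K (P l)]
    (hsimple : ∀ l, IsSimpleModule A (L l))
    (hdistinct : ∀ l m, Nonempty (L l ≃ₗ[A] L m) → l = m)
    (hproj : ∀ l, Module.Projective A (P l))
    (hcover : ∀ l, ∃ π : P l →ₗ[A] L l, Function.Surjective π ∧ LinearMap.ker π = Rad A (P l))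
    -- the map ' on Λ₀ = {l | P l injective}, an involution, with soc(P^λ) ≅ L^{λ'}
    (pr : ∀ s : {l : Lam // Module.Injective A (P l)}, {l : Lam // Module.Injective A (P l)})
    (hpr : ∀ s, Nonempty (↥(Socle A (P s.1)) ≃ₗ[A] L (pr s).1))
    (hprinv : ∀ s, pr (pr s) = s)
    -- the fixed nonzero maps θ_λ : P^λ → P^{λ'} with image soc(P^{λ'})
    (θ : ∀ s : {l : Lam // Module.Injective A (P l)}, P s.1 →ₗ[A] P (pr s).1)
    (hθ : ∀ s, LinearMap.range (θ s) = Socle A (P (pr s).1))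
    -- a symmetrizing form τ on B = End_A(⊕_{λ∈Λ₀} P^λ)
    (τ : Module.End A (DirectSum {l : Lam // Module.Injective A (P l)} (fun s => P s.1)) →ₗ[K] K)
    (hsymm : ∀ x y, τ (x * y) = τ (y * x))
    (hnd : ∀ x, x ≠ 0 → ∃ y, τ (x * y) ≠ 0) :
    (∀ s, pr s = s ∧
      τ (emb A {l : Lam // Module.Injective A (P l)} (fun s => P s.1) s (pr s) (θ s)) ≠ 0) ∧
    (∀ s t, s ≠ t → ∀ f : P s.1 →ₗ[A] P t.1,
      τ (emb A {l : Lam // Module.Injective A (P l)} (fun s => P s.1) s t f) = 0) :=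
  stmt_3_general K A Lam L P hsimple hdistinct hcover pr hpr θ hθ τ hsymm hnd
end
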